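/- arXiv:2306.09268 — 8 statements merged into one kernel-verified Lean document; each statement's English description precedes it below -/
import Mathlib

section
/- Let K be an open bounded convex body in ℝⁿ containing points p and q, and let b be the intersection of the ray from p through q with the boundary of K. Then the Funk distance d_F(p,q) = log(|p-b|/|q-b|) satisfies the triangle inequality: for any three points p, q, r in K, d_F(p,r) ≤ d_F(p,q) + d_F(q,r). -/
/-!
Seen from `p`, the Funk distance is `-log (1 - g)` where `g` is the gauge of `K - p` at `q - p`,
so the triangle inequality is the multiplicative inequality
`(1 - g_p(q)) (1 - g_q(r)) ≤ 1 - g_p(r)`. With `α = g_p(q)`, `β = g_q(r)` and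
`σ = α + β - αβ`, the point `p + σ⁻¹ (r - p)` is a convex combination of the exit points of
the rays `p → q` and `q → r`; it therefore lies in `closure K`, i.e. `g_p(r) ≤ σ`.
-/

open scoped Topology

namespace Funk

lemma preimage_add_const_mem_nhds_zero {G : Type*} [TopologicalSpace G] [AddGroup G]
    [ContinuousAdd G] {K : Set G} {p : G} (hKo : IsOpen K) (hp : p ∈ K) :
    (· + p) ⁻¹' K ∈ 𝓝 (0 : G) :=
  (hKo.preimage (continuous_add_const p)).mem_nhds (by simpa using hp)

variable {E : Type*} [NormedAddCommGroup E] [NormedSpace ℝ E] {K : Set E} {p q r x : E}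

noncomputable def gaugeAt (K : Set E) (p x : E) : ℝ :=
  gauge ((· + p) ⁻¹' K) (x - p)

/-- The exit point of the ray from `p` through `q` is `p + (gaugeAt K p q)⁻¹ • (q - p)`
(`add_inv_gaugeAt_smul_mem_frontier`), which turns `log (‖p - b‖ / ‖q - b‖)` into this. -/
noncomputable def funkDist (K : Set E) (p q : E) : ℝ :=
  -Real.log (1 - gaugeAt K p q)

@[simp]
lemma gaugeAt_self : gaugeAt K p p = 0 := by
  simp [gaugeAt]

lemma gaugeAt_nonneg : 0 ≤ gaugeAt K p x :=
  gauge_nonneg _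

lemma gaugeAt_add_smul {t : ℝ} (ht : 0 ≤ t) :
    gaugeAt K p (p + t • (x - p)) = t * gaugeAt K p x := by
  rw [gaugeAt, add_sub_cancel_left, gauge_smul_of_nonneg ht, smul_eq_mul, gaugeAt]

lemma gaugeAt_lt_one (hKo : IsOpen K) (hx : x ∈ K) : gaugeAt K p x < 1 :=
  gauge_lt_one_of_mem_of_isOpen (hKo.preimage (continuous_add_const p)) (by simpa using hx)

lemma gaugeAt_pos (hKo : IsOpen K) (hKb : Bornology.IsBounded K) (hp : p ∈ K) (hx : x ≠ p) :
    0 < gaugeAt K p x := by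
  have hbdd : Bornology.IsVonNBounded ℝ ((· + p) ⁻¹' K) :=
    (NormedSpace.isVonNBounded_iff ℝ).2 <|
      (IsometryEquiv.addRight p).isometry.antilipschitz.isBounded_preimage hKb
  exact (gauge_pos (absorbent_nhds_zero (preimage_add_const_mem_nhds_zero hKo hp)) hbdd).2
    (sub_ne_zero.2 hx)

lemma gaugeAt_le_one_iff_mem_closure (hKo : IsOpen K) (hKc : Convex ℝ K) (hp : p ∈ K) :
    gaugeAt K p x ≤ 1 ↔ x ∈ closure K := by
  rw [gaugeAt, gauge_le_one_iff_mem_closure (hKc.translate_preimage_left p)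
    (preimage_add_const_mem_nhds_zero hKo hp)]
  change x - p ∈ closure (Homeomorph.addRight p ⁻¹' K) ↔ _
  rw [← Homeomorph.preimage_closure]
  simp

lemma gaugeAt_eq_one_iff_mem_frontier (hKo : IsOpen K) (hKc : Convex ℝ K) (hp : p ∈ K) :
    gaugeAt K p x = 1 ↔ x ∈ frontier K := by
  rw [gaugeAt, gauge_eq_one_iff_mem_frontier (hKc.translate_preimage_left p)
    (preimage_add_const_mem_nhds_zero hKo hp)]
  change x - p ∈ frontier (Homeomorph.addRight p ⁻¹' K) ↔ _
  rw [← Homeomorph.preimage_frontier]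
  simp

lemma add_inv_gaugeAt_smul_mem_frontier (hKo : IsOpen K) (hKc : Convex ℝ K)
    (hKb : Bornology.IsBounded K) (hp : p ∈ K) (hx : x ≠ p) :
    p + (gaugeAt K p x)⁻¹ • (x - p) ∈ frontier K := by
  rw [← gaugeAt_eq_one_iff_mem_frontier hKo hKc hp, gaugeAt_add_smul (inv_nonneg.2 gaugeAt_nonneg),
    inv_mul_cancel₀ (gaugeAt_pos hKo hKb hp hx).ne']

lemma one_sub_gaugeAt_mul_le (hKo : IsOpen K) (hKc : Convex ℝ K) (hKb : Bornology.IsBounded K)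
    (hp : p ∈ K) (hq : q ∈ K) (hr : r ∈ K) :
    (1 - gaugeAt K p q) * (1 - gaugeAt K q r) ≤ 1 - gaugeAt K p r := by
  obtain rfl | hqp := eq_or_ne q p
  · simp
  obtain rfl | hrq := eq_or_ne r q
  · simp
  set α := gaugeAt K p q
  set β := gaugeAt K q r
  have hα : 0 < α := gaugeAt_pos hKo hKb hp hqp
  have hβ : 0 < β := gaugeAt_pos hKo hKb hq hrq
  have hα1 : α < 1 := gaugeAt_lt_one hKo hq
  have hβ1 : β < 1 := gaugeAt_lt_one hKo hr
  set σ := α + β - α * β with hσdef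
  have hσ : 0 < σ := by nlinarith
  have hb : p + α⁻¹ • (q - p) ∈ closure K :=
    frontier_subset_closure (add_inv_gaugeAt_smul_mem_frontier hKo hKc hKb hp hqp)
  have hc : q + β⁻¹ • (r - q) ∈ closure K :=
    frontier_subset_closure (add_inv_gaugeAt_smul_mem_frontier hKo hKc hKb hq hrq)
  have hcomb : p + σ⁻¹ • (r - p) ∈ closure K := by
    convert hKc.closure hb hc (a := α * (1 - β) / σ) (b := β / σ) (by bound) (by positivity)
      (by field_simp; ring) using 1
    match_scalars <;> field_simp <;> rw [hσdef] <;> ring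
  have hle := (gaugeAt_le_one_iff_mem_closure hKo hKc hp).2 hcomb
  rw [gaugeAt_add_smul (inv_nonneg.2 hσ.le), inv_mul_le_iff₀ hσ] at hle
  linarith

lemma funkDist_triangle (hKo : IsOpen K) (hKc : Convex ℝ K) (hKb : Bornology.IsBounded K)
    (hp : p ∈ K) (hq : q ∈ K) (hr : r ∈ K) :
    funkDist K p r ≤ funkDist K p q + funkDist K q r := by
  have hpq : 0 < 1 - gaugeAt K p q := sub_pos.2 (gaugeAt_lt_one hKo hq)
  have hqr : 0 < 1 - gaugeAt K q r := sub_pos.2 (gaugeAt_lt_one hKo hr)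
  have := Real.log_le_log (mul_pos hpq hqr) (one_sub_gaugeAt_mul_le hKo hKc hKb hp hq hr)
  rw [Real.log_mul hpq.ne' hqr.ne'] at this
  simp only [funkDist]
  linarith

lemma log_norm_div_norm_eq_funkDist (hKo : IsOpen K) (hKb : Bornology.IsBounded K) (hp : p ∈ K)
    (hq : q ∈ K) (hqp : q ≠ p) :
    Real.log (‖p - (p + (gaugeAt K p q)⁻¹ • (q - p))‖ / ‖q - (p + (gaugeAt K p q)⁻¹ • (q - p))‖) =
      funkDist K p q := by
  rw [funkDist]
  set α := gaugeAt K p q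
  have hα : 0 < α := gaugeAt_pos hKo hKb hp hqp
  have hα1 : α < 1 := gaugeAt_lt_one hKo hq
  have hv : 0 < ‖q - p‖ := norm_pos_iff.2 (sub_ne_zero.2 hqp)
  have hpb : ‖p - (p + α⁻¹ • (q - p))‖ = α⁻¹ * ‖q - p‖ := by
    rw [sub_add_cancel_left, norm_neg, norm_smul, Real.norm_of_nonneg (inv_nonneg.2 hα.le)]
  have hqb : ‖q - (p + α⁻¹ • (q - p))‖ = (α⁻¹ - 1) * ‖q - p‖ := by
    rw [show q - (p + α⁻¹ • (q - p)) = (1 - α⁻¹) • (q - p) by module, norm_smul,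
      Real.norm_of_nonpos (by linarith [one_lt_inv_iff₀.2 ⟨hα, hα1⟩]), neg_sub]
  rw [hpb, hqb, mul_div_mul_right _ _ hv.ne', ← Real.log_inv]
  congr 1
  field_simp

end Funk

open Funk

/-- The Funk distance on a bounded open convex body satisfies
the triangle inequality. `dF` is characterized by: `dF p p = 0`, and for
`p ≠ q`, `dF p q = log (‖p - b‖ / ‖q - b‖)` where `b` is the point where the
ray from `p` through `q` meets the boundary of `K`. -/
theorem funk_triangle_inequality {n : ℕ}
    (K : Set (EuclideanSpace ℝ (Fin n)))
    (hKopen : IsOpen K) (hKconv : Convex ℝ K) (hKbdd : Bornology.IsBounded K)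
    (dF : EuclideanSpace ℝ (Fin n) → EuclideanSpace ℝ (Fin n) → ℝ)
    (hdiag : ∀ p ∈ K, dF p p = 0)
    (hdef : ∀ p ∈ K, ∀ q ∈ K, p ≠ q →
      ∀ b ∈ frontier K, ∀ t : ℝ, 1 ≤ t → b = p + t • (q - p) →
        dF p q = Real.log (‖p - b‖ / ‖q - b‖)) :
    ∀ p ∈ K, ∀ q ∈ K, ∀ r ∈ K, dF p r ≤ dF p q + dF q r := by
  have hdF : ∀ p ∈ K, ∀ q ∈ K, dF p q = funkDist K p q := by
    intro p hp q hq
    obtain rfl | hqp := eq_or_ne q p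
    · simp [hdiag q hq, funkDist]
    rw [← log_norm_div_norm_eq_funkDist hKopen hKbdd hp hq hqp]
    refine hdef p hp q hq hqp.symm _
      (add_inv_gaugeAt_smul_mem_frontier hKopen hKconv hKbdd hp hqp) _ ?_ rfl
    exact one_le_inv₀ (gaugeAt_pos hKopen hKbdd hp hqp) |>.2 (gaugeAt_lt_one hKopen hq).le
  intro p hp q hq r hr
  rw [hdF p hp r hr, hdF p hp q hq, hdF q hq r hr]
  exact funkDist_triangle hKopen hKconv hKbdd hp hq hr
end

section
/- Let K be a convex body in ℝⁿ with 0 in its interior, and let x be a point in the interior of K. Then the polar of K with respect to x, namely (K - x)°, equals the set { w / (1 - ⟨w, x⟩) : w ∈ K° }. -/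
lemma aux_dir' {n : ℕ} {K : Set (Fin n → ℝ)} {z : Fin n → ℝ} (hz : z ∈ interior K)
    (u : Fin n → ℝ) : ∃ t : ℝ, 0 < t ∧ z + t • u ∈ K := by
  obtain ⟨ε, hε, hball⟩ := Metric.isOpen_iff.mp isOpen_interior z hz
  refine ⟨ε / (2 * (‖u‖ + 1)), by positivity, interior_subset (hball ?_)⟩
  rw [Metric.mem_ball, dist_eq_norm]
  have h1 : z + (ε / (2 * (‖u‖ + 1))) • u - z = (ε / (2 * (‖u‖ + 1))) • u := by
    abel
  rw [h1, norm_smul, Real.norm_eq_abs, abs_of_pos (by positivity)]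
  have hn : (0:ℝ) ≤ ‖u‖ := norm_nonneg u
  rw [div_mul_eq_mul_div, div_lt_iff₀ (by positivity)]
  nlinarith

lemma aux_sum_pos {n : ℕ} {u : Fin n → ℝ} (hu : u ≠ 0) : 0 < ∑ i, u i * u i := by
  have : ∃ i, u i ≠ 0 := by
    by_contra h; push_neg at h; exact hu (funext h)
  obtain ⟨i, hi⟩ := this
  exact Finset.sum_pos' (fun j _ => mul_self_nonneg _)
    ⟨i, Finset.mem_univ i, mul_self_pos.mpr hi⟩

/-- For a convex body `K` with `0` in its interior and `x` interior to `K`,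
the polar of `K` with respect to `x` is `{ w / (1 - ⟨w,x⟩) : w ∈ K° }`. -/
theorem polar_with_respect_to_point {n : ℕ}
    (K : Set (Fin n → ℝ)) (hKcpt : IsCompact K) (hKconv : Convex ℝ K)
    (hK0 : (0 : Fin n → ℝ) ∈ interior K)
    (x : Fin n → ℝ) (hx : x ∈ interior K) :
    {ξ : Fin n → ℝ | ∀ y ∈ K, ∑ i, ξ i * (y i - x i) ≤ 1} =
      {v : Fin n → ℝ | ∃ w : Fin n → ℝ,
        (∀ y ∈ K, ∑ i, w i * y i ≤ 1) ∧ v = (1 - ∑ i, w i * x i)⁻¹ • w} := by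
  have hsub : ∀ (u y : Fin n → ℝ), ∑ i, u i * (y i - x i)
      = (∑ i, u i * y i) - ∑ i, u i * x i := by
    intro u y
    simp [mul_sub, Finset.sum_sub_distrib]
  have hsm : ∀ (c : ℝ) (u y : Fin n → ℝ), ∑ i, (c • u) i * y i = c * ∑ i, u i * y i := by
    intro c u y
    simp [Finset.mul_sum, mul_assoc]
  ext ξ
  simp only [Set.mem_setOf_eq]
  constructor
  · intro hξ
    by_cases hz : ξ = 0
    · exact ⟨0, by simp, by simp [hz]⟩
    · obtain ⟨t, ht, hmem⟩ := aux_dir' hK0 ξ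
      have h1 := hξ _ hmem
      rw [hsub] at h1
      have hsq := aux_sum_pos hz
      have he : ∑ i, ξ i * (0 + t • ξ) i = t * ∑ i, ξ i * ξ i := by
        simp only [Pi.add_apply, Pi.zero_apply, Pi.smul_apply, smul_eq_mul, Finset.mul_sum]
        apply Finset.sum_congr rfl
        intro i _
        ring
      rw [he] at h1
      have hc : 0 < 1 + ∑ i, ξ i * x i := by nlinarith
      set c := 1 + ∑ i, ξ i * x i with hcdef
      have hci : c⁻¹ * c = 1 := inv_mul_cancel₀ hc.ne'
      refine ⟨c⁻¹ • ξ, ?_, ?_⟩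
      · intro y hy
        have h2 := hξ y hy
        rw [hsub] at h2
        rw [hsm]
        nlinarith [mul_le_mul_of_nonneg_left h2 (inv_nonneg.mpr hc.le)]
      · have hwx : ∑ i, (c⁻¹ • ξ) i * x i = 1 - c⁻¹ := by
          rw [hsm]
          have hx1 : ∑ i, ξ i * x i = c - 1 := by rw [hcdef]; ring
          rw [hx1, mul_sub, hci, mul_one]
        rw [hwx]
        have : (1 - (1 - c⁻¹)) = c⁻¹ := by ring
        rw [this, inv_inv, smul_smul, mul_inv_cancel₀ hc.ne', one_smul]
  · rintro ⟨w, hw, rfl⟩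
    by_cases hz : w = 0
    · intro y hy; simp [hz]
    · obtain ⟨t, ht, hmem⟩ := aux_dir' hx w
      have h1 := hw _ hmem
      have he : ∑ i, w i * (x + t • w) i = (∑ i, w i * x i) + t * ∑ i, w i * w i := by
        simp only [Pi.add_apply, Pi.smul_apply, smul_eq_mul, mul_add,
          Finset.sum_add_distrib, Finset.mul_sum]
        congr 1
        apply Finset.sum_congr rfl
        intro i _
        ring
      rw [he] at h1
      have hsq := aux_sum_pos hz
      have hd : 0 < 1 - ∑ i, w i * x i := by nlinarith
      set d := 1 - ∑ i, w i * x i with hddef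
      intro y hy
      have h2 := hw y hy
      rw [hsub, hsm, hsm]
      have hdi : d⁻¹ * d = 1 := inv_mul_cancel₀ hd.ne'
      have : (∑ i, w i * y i) - ∑ i, w i * x i ≤ d := by
        rw [hddef]; linarith
      nlinarith [mul_le_mul_of_nonneg_left this (inv_nonneg.mpr hd.le)]
end

section
/- Let A ⊂ ℝᵏ and B ⊂ ℝˡ be convex bodies each containing the origin. Define A ×₁ B := { (tx, (1-t)y) : x ∈ A, y ∈ B, 0 ≤ t ≤ 1 } ⊂ ℝ^{k+l}. Then the Lebesgue volume satisfies |A ×₁ B| = (k! · l! / (k+l)!) · |A| · |B|. -/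
/-!
Over `u ∈ A` the slice of the join is `(1 - gauge A u) • B`, so by Fubini
`|A ×₁ B| = |B| ∫_A (1 - gauge A u)^l du`. For `0 < t ≤ 1` the superlevel set
`{u ∈ A | t ≤ 1 - gauge A u}` is the dilate `(1 - t) • A`, of volume `(1 - t)^k |A|`, so the layer
cake formula turns the integral into the Beta integral
`|A| ∫₀¹ (1 - t)^k l t^(l-1) dt = |A| k! l! / (k + l)!`.
-/

open MeasureTheory Set Pointwise Filter Topology Module Nat
open scoped ENNReal

section Gauge

variable {E : Type*} [NormedAddCommGroup E] [NormedSpace ℝ E] {A : Set E} {u : E} {s t : ℝ}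

theorem StarConvex.smul_set_subset_of_le (hA : StarConvex ℝ 0 A) (hs : 0 ≤ s) (hst : s ≤ t) :
    s • A ⊆ t • A := by
  rintro _ ⟨a, ha, rfl⟩
  rcases (hs.trans hst).eq_or_lt with rfl | ht
  · rw [le_antisymm hst hs]
    exact smul_mem_smul_set ha
  · refine ⟨(s / t) • a, hA.smul_mem ha (div_nonneg hs ht.le) (div_le_one_of_le₀ hst ht.le), ?_⟩
    show t • ((s / t) • a) = s • a
    rw [smul_smul, mul_div_cancel₀ _ ht.ne']

theorem StarConvex.mem_smul_of_gauge_lt (hA : StarConvex ℝ 0 A) (hu : u ∈ A)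
    (h : gauge A u < t) : u ∈ t • A := by
  -- without `u ∈ A` the set below may be empty, and then `gauge A u` is the junk value `sInf ∅ = 0`
  have hne : {r : ℝ | 0 < r ∧ u ∈ r • A}.Nonempty := ⟨1, one_pos, by rwa [one_smul]⟩
  obtain ⟨r, ⟨hr, hur⟩, hrt⟩ := (csInf_lt_iff ⟨0, fun _ h => h.1.le⟩ hne).1 h
  exact hA.smul_set_subset_of_le hr.le hrt.le hur

theorem StarConvex.mem_smul_of_gauge_le (hA : StarConvex ℝ 0 A) (hAc : IsClosed A) (hu : u ∈ A)
    (hs : 0 < s) (h : gauge A u ≤ s) : u ∈ s • A := by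
  rw [mem_smul_set_iff_inv_smul_mem₀ hs.ne']
  have hlim : Tendsto (fun r : ℝ => r⁻¹ • u) (𝓝[>] s) (𝓝 (s⁻¹ • u)) :=
    ((continuousAt_inv₀ hs.ne').tendsto.smul_const u).mono_left nhdsWithin_le_nhds
  refine hAc.mem_of_tendsto hlim (eventually_nhdsWithin_of_forall fun r (hr : s < r) => ?_)
  rw [← mem_smul_set_iff_inv_smul_mem₀ (hs.trans hr).ne']
  exact hA.mem_smul_of_gauge_lt hu (h.trans_lt hr)

theorem StarConvex.eq_zero_of_gauge_eq_zero (hA : StarConvex ℝ 0 A) (hAc : Bornology.IsBounded A)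
    (hu : u ∈ A) (h : gauge A u = 0) : u = 0 := by
  obtain ⟨R, hR⟩ := hAc.exists_norm_le
  have hle : ∀ r > 0, ‖u‖ ≤ r * R := fun r hr => by
    obtain ⟨a, ha, rfl⟩ := hA.mem_smul_of_gauge_lt hu (h ▸ hr)
    rw [norm_smul, Real.norm_of_nonneg hr.le]
    exact mul_le_mul_of_nonneg_left (hR a ha) hr.le
  have hlim : Tendsto (fun r : ℝ => r * R) (𝓝[>] 0) (𝓝 0) := by
    simpa using (tendsto_id.mul_const R).mono_left (nhdsWithin_le_nhds (a := (0 : ℝ)))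
  exact norm_le_zero_iff.1 (ge_of_tendsto hlim (eventually_nhdsWithin_of_forall hle))

theorem StarConvex.mem_gauge_smul_self (hA : StarConvex ℝ 0 A) (hAc : IsCompact A) (hu : u ∈ A) :
    u ∈ gauge A u • A := by
  rcases (gauge_nonneg u).eq_or_lt with h | h
  · have hu₀ := hA.eq_zero_of_gauge_eq_zero hAc.isBounded hu h.symm
    rw [← h]
    exact ⟨u, hu, by simp [hu₀]⟩
  · exact hA.mem_smul_of_gauge_le hAc.isClosed hu h le_rfl

theorem indicator_one_sub_gauge_mem_Icc : A.indicator (1 - gauge A) u ∈ Icc 0 1 := by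
  by_cases hu : u ∈ A
  · rw [indicator_of_mem hu, Pi.sub_apply, Pi.one_apply]
    exact ⟨sub_nonneg.2 (gauge_le_one_of_mem hu), sub_le_self _ (gauge_nonneg u)⟩
  · rw [indicator_of_notMem hu]
    exact ⟨le_rfl, zero_le_one⟩

theorem StarConvex.setOf_le_indicator_one_sub_gauge (hA : StarConvex ℝ 0 A) (hAc : IsCompact A)
    (ht₀ : 0 < t) (ht₁ : t ≤ 1) : {u | t ≤ A.indicator (1 - gauge A) u} = (1 - t) • A := by
  ext u
  constructor
  · intro hu
    have huA : u ∈ A := by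
      by_contra h
      rw [mem_ofPred_eq, indicator_of_notMem h] at hu
      linarith
    rw [mem_ofPred_eq, indicator_of_mem huA, Pi.sub_apply, Pi.one_apply] at hu
    exact hA.smul_set_subset_of_le (gauge_nonneg u) (by linarith) (hA.mem_gauge_smul_self hAc huA)
  · rintro ⟨a, ha, rfl⟩
    have hmem : (1 - t) • a ∈ A := hA.smul_mem ha (by linarith) (by linarith)
    rw [mem_ofPred_eq, indicator_of_mem hmem, Pi.sub_apply, Pi.one_apply]
    linarith [gauge_le_of_mem (by linarith : 0 ≤ 1 - t) (smul_mem_smul_set ha)]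

theorem StarConvex.measurable_indicator_one_sub_gauge [MeasurableSpace E] [OpensMeasurableSpace E]
    (hA : StarConvex ℝ 0 A) (hAc : IsCompact A) : Measurable (A.indicator (1 - gauge A)) := by
  refine measurable_of_Ici fun t => ?_
  rcases le_or_gt t 0 with ht₀ | ht₀
  · convert MeasurableSet.univ
    exact eq_univ_of_forall fun u => ht₀.trans indicator_one_sub_gauge_mem_Icc.1
  rcases le_or_gt t 1 with ht₁ | ht₁
  · change MeasurableSet {u | t ≤ A.indicator (1 - gauge A) u}
    rw [hA.setOf_le_indicator_one_sub_gauge hAc ht₀ ht₁]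
    exact (hAc.image (continuous_const_smul (1 - t))).measurableSet
  · convert MeasurableSet.empty
    exact eq_empty_of_forall_notMem fun u hu =>
      (indicator_one_sub_gauge_mem_Icc.2.trans_lt ht₁).not_ge hu

end Gauge

def join {E F : Type*} [AddCommGroup E] [Module ℝ E] [AddCommGroup F] [Module ℝ F]
    (A : Set E) (B : Set F) : Set (E × F) :=
  {p | ∃ x ∈ A, ∃ y ∈ B, ∃ t : ℝ, 0 ≤ t ∧ t ≤ 1 ∧ p = (t • x, (1 - t) • y)}

section Join

variable {E F : Type*} [NormedAddCommGroup E] [NormedSpace ℝ E] [NormedAddCommGroup F]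
  [NormedSpace ℝ F] {A : Set E} {B : Set F}

theorem isCompact_join (hA : IsCompact A) (hB : IsCompact B) : IsCompact (join A B) := by
  have : join A B = (fun q : ℝ × E × F => (q.1 • q.2.1, (1 - q.1) • q.2.2)) ''
      (Icc 0 1 ×ˢ A ×ˢ B) := by
    ext p
    constructor
    · rintro ⟨x, hx, y, hy, t, ht₀, ht₁, rfl⟩
      exact ⟨(t, x, y), ⟨⟨ht₀, ht₁⟩, hx, hy⟩, rfl⟩
    · rintro ⟨⟨t, x, y⟩, ⟨⟨ht₀, ht₁⟩, hx, hy⟩, rfl⟩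
      exact ⟨x, hx, y, hy, t, ht₀, ht₁, rfl⟩
  rw [this]
  exact (isCompact_Icc.prod (hA.prod hB)).image (by fun_prop)

theorem mem_join_iff (hA : StarConvex ℝ 0 A) (hAc : IsCompact A) (hB : StarConvex ℝ 0 B)
    {u : E} {v : F} : (u, v) ∈ join A B ↔ u ∈ A ∧ v ∈ (1 - gauge A u) • B := by
  constructor
  · rintro ⟨x, hx, y, hy, t, ht₀, ht₁, huv⟩
    obtain ⟨rfl, rfl⟩ := Prod.mk_inj.1 huv
    have hg : gauge A (t • x) ≤ t := gauge_le_of_mem ht₀ (smul_mem_smul_set hx)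
    exact ⟨hA.smul_mem hx ht₀ ht₁,
      hB.smul_set_subset_of_le (by linarith) (by linarith) (smul_mem_smul_set hy)⟩
  · rintro ⟨hu, y, hy, rfl⟩
    obtain ⟨x, hx, hxu⟩ := hA.mem_gauge_smul_self hAc hu
    exact ⟨x, hx, y, hy, gauge A u, gauge_nonneg u, gauge_le_one_of_mem hu, Prod.ext hxu.symm rfl⟩

variable [MeasurableSpace E] [BorelSpace E] [MeasurableSpace F] [BorelSpace F]
  [FiniteDimensional ℝ F]

theorem MeasureTheory.Measure.prod_join (μ : Measure E) (ν : Measure F) [ν.IsAddHaarMeasure]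
    (hA : StarConvex ℝ 0 A) (hAc : IsCompact A) (hB : StarConvex ℝ 0 B) (hBc : IsCompact B) :
    μ.prod ν (_root_.join A B) =
      (∫⁻ u in A, ENNReal.ofReal ((1 - gauge A u) ^ finrank ℝ F) ∂μ) * ν B := by
  have hslice : ∀ u, ν (Prod.mk u ⁻¹' _root_.join A B) =
      A.indicator (fun u => ENNReal.ofReal ((1 - gauge A u) ^ finrank ℝ F) * ν B) u := by
    intro u
    by_cases hu : u ∈ A
    · have : Prod.mk u ⁻¹' _root_.join A B = (1 - gauge A u) • B := by
        ext v
        simp only [mem_preimage, mem_join_iff hA hAc hB, hu, true_and]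
      rw [indicator_of_mem hu, this,
        Measure.addHaar_smul_of_nonneg ν (sub_nonneg.2 (gauge_le_one_of_mem hu))]
    · have : Prod.mk u ⁻¹' _root_.join A B = ∅ := by
        ext v
        simp only [mem_preimage, mem_join_iff hA hAc hB, hu, false_and, mem_empty_iff_false]
      rw [indicator_of_notMem hu, this, measure_empty]
  rw [Measure.prod_apply (isCompact_join hAc hBc).measurableSet, lintegral_congr hslice,
    lintegral_indicator hAc.measurableSet, lintegral_mul_const' _ _ hBc.measure_lt_top.ne]

end Join

theorem integral_pow_mul_one_sub_pow (m n : ℕ) :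
    ∫ x in (0 : ℝ)..1, x ^ m * (1 - x) ^ n = m ! * n ! / (m + n + 1)! := by
  have h := Complex.betaIntegral_eq_Gamma_mul_div (m + 1) (n + 1)
    (by simp only [Complex.add_re, Complex.natCast_re, Complex.one_re]; positivity)
    (by simp only [Complex.add_re, Complex.natCast_re, Complex.one_re]; positivity)
  have hsum : (m + 1 : ℂ) + (n + 1) = ((m + n + 1 : ℕ) : ℂ) + 1 := by push_cast; ring
  simp only [Complex.betaIntegral, add_sub_cancel_right, Complex.cpow_natCast, hsum,
    Complex.Gamma_nat_eq_factorial] at h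
  apply Complex.ofReal_injective
  rw [← intervalIntegral.integral_ofReal]
  push_cast
  exact h

theorem integral_one_sub_pow_mul_succ_mul_pow (k m : ℕ) :
    ∫ t in (0 : ℝ)..1, (1 - t) ^ k * ((m + 1) * t ^ m) = k ! * (m + 1)! / (k + (m + 1))! := by
  simp_rw [show ∀ t : ℝ, (1 - t) ^ k * ((m + 1) * t ^ m) = (m + 1) * (t ^ m * (1 - t) ^ k)
    from fun t => by ring]
  rw [intervalIntegral.integral_const_mul, integral_pow_mul_one_sub_pow,
    show k + (m + 1) = m + k + 1 by ring, Nat.factorial_succ m]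
  push_cast
  ring

section Volume

variable {E : Type*} [NormedAddCommGroup E] [NormedSpace ℝ E] [MeasurableSpace E] [BorelSpace E]
  [FiniteDimensional ℝ E] {A : Set E}

theorem StarConvex.measure_setOf_le_indicator_one_sub_gauge (μ : Measure E) [μ.IsAddHaarMeasure]
    (hA : StarConvex ℝ 0 A) (hAc : IsCompact A) {t : ℝ} (ht : 0 < t) :
    μ {u | t ≤ A.indicator (1 - gauge A) u} =
      (Ioc 0 1).indicator (fun t => ENNReal.ofReal ((1 - t) ^ finrank ℝ E) * μ A) t := by
  by_cases ht₁ : t ≤ 1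
  · rw [indicator_of_mem (show t ∈ Ioc 0 1 from ⟨ht, ht₁⟩),
      hA.setOf_le_indicator_one_sub_gauge hAc ht ht₁,
      Measure.addHaar_smul_of_nonneg μ (sub_nonneg.2 ht₁)]
  · have : {u | t ≤ A.indicator (1 - gauge A) u} = ∅ := eq_empty_of_forall_notMem fun u hu =>
      ht₁ (hu.trans indicator_one_sub_gauge_mem_Icc.2)
    rw [indicator_of_notMem (fun h => ht₁ h.2), this, measure_empty]

theorem StarConvex.setLIntegral_one_sub_gauge_pow (μ : Measure E) [μ.IsAddHaarMeasure]
    (hA : StarConvex ℝ 0 A) (hAc : IsCompact A) (n : ℕ) :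
    ∫⁻ u in A, ENNReal.ofReal ((1 - gauge A u) ^ n) ∂μ =
      ((finrank ℝ E)! * n ! : ℝ≥0∞) / ((finrank ℝ E + n)! : ℝ≥0∞) * μ A := by
  set k := finrank ℝ E
  set f := A.indicator (1 - gauge A)
  rcases n with _ | m
  · simp [ENNReal.div_self (Nat.cast_ne_zero.2 k.factorial_ne_zero) (ENNReal.natCast_ne_top _)]
  have hlevel : ∀ t ∈ Ioi (0 : ℝ), μ {u | t ≤ f u} * ENNReal.ofReal ((m + 1) * t ^ m) =
      (Ioc 0 1).indicator
        (fun t => ENNReal.ofReal ((1 - t) ^ k * ((m + 1) * t ^ m)) * μ A) t := by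
    intro t ht
    rw [hA.measure_setOf_le_indicator_one_sub_gauge μ hAc ht]
    by_cases ht₁ : t ∈ Ioc 0 1
    · rw [indicator_of_mem ht₁, indicator_of_mem ht₁,
        ENNReal.ofReal_mul (pow_nonneg (sub_nonneg.2 ht₁.2) k)]
      ring
    · rw [indicator_of_notMem ht₁, indicator_of_notMem ht₁, zero_mul]
  calc ∫⁻ u in A, ENNReal.ofReal ((1 - gauge A u) ^ (m + 1)) ∂μ
      = ∫⁻ u, ENNReal.ofReal (∫ t in 0..f u, (m + 1) * t ^ m) ∂μ := by
        rw [← lintegral_indicator hAc.measurableSet]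
        congr 1 with u
        by_cases hu : u ∈ A <;>
          simp [f, hu, integral_pow, mul_div_cancel₀ _ (Nat.cast_add_one_ne_zero (R := ℝ) m)]
    _ = ∫⁻ t in Ioi 0, μ {u | t ≤ f u} * ENNReal.ofReal ((m + 1) * t ^ m) :=
        lintegral_comp_eq_lintegral_meas_le_mul μ
          (ae_of_all _ fun _ => indicator_one_sub_gauge_mem_Icc.1)
          (hA.measurable_indicator_one_sub_gauge hAc).aemeasurable
          (fun t _ =>
            (by fun_prop : Continuous fun t : ℝ => (m + 1) * t ^ m).intervalIntegrable 0 t)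
          (ae_restrict_of_forall_mem measurableSet_Ioi fun t (ht : 0 < t) => by positivity)
    _ = ∫⁻ t in Ioc 0 1, ENNReal.ofReal ((1 - t) ^ k * ((m + 1) * t ^ m)) * μ A := by
        rw [setLIntegral_congr_fun measurableSet_Ioi hlevel,
          setLIntegral_indicator measurableSet_Ioc, inter_eq_left.2 Ioc_subset_Ioi_self]
    _ = ENNReal.ofReal (∫ t in 0..1, (1 - t) ^ k * ((m + 1) * t ^ m)) * μ A := by
        rw [lintegral_mul_const' _ _ hAc.measure_lt_top.ne,
          intervalIntegral.integral_of_le zero_le_one, ofReal_integral_eq_lintegral_ofReal]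
        · exact (Continuous.integrableOn_Icc (by fun_prop)).mono_set Ioc_subset_Icc_self
        · exact ae_restrict_of_forall_mem measurableSet_Ioc fun t ht =>
            mul_nonneg (pow_nonneg (sub_nonneg.2 ht.2) k) (by have := ht.1; positivity)
    _ = _ := by
        rw [integral_one_sub_pow_mul_succ_mul_pow, ENNReal.ofReal_div_of_pos (by positivity),
          ENNReal.ofReal_mul (by positivity), ENNReal.ofReal_natCast, ENNReal.ofReal_natCast,
          ENNReal.ofReal_natCast]

end Volume

theorem volume_join_general {k l : ℕ}
    (A : Set (Fin k → ℝ)) (B : Set (Fin l → ℝ))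
    (hAcpt : IsCompact A) (hAconv : Convex ℝ A)
    (hBcpt : IsCompact B) (hBconv : Convex ℝ B)
    (hA0 : (0 : Fin k → ℝ) ∈ A) (hB0 : (0 : Fin l → ℝ) ∈ B) :
    volume {p : (Fin k → ℝ) × (Fin l → ℝ) |
        ∃ x ∈ A, ∃ y ∈ B, ∃ t : ℝ, 0 ≤ t ∧ t ≤ 1 ∧ p = (t • x, (1 - t) • y)} =
      ((Nat.factorial k * Nat.factorial l : ℝ≥0∞) / (Nat.factorial (k + l) : ℝ≥0∞)) *
        volume A * volume B := by
  have hA := hAconv.starConvex hA0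
  change volume (join A B) = _
  rw [Measure.volume_eq_prod,
    Measure.prod_join volume volume hA hAcpt (hBconv.starConvex hB0) hBcpt, Module.finrank_fin_fun,
    hA.setLIntegral_one_sub_gauge_pow volume hAcpt, Module.finrank_fin_fun]

/-- For convex bodies `A ⊂ ℝᵏ`, `B ⊂ ℝˡ` containing the origin,
the join `A ×₁ B = { (tx,(1-t)y) : x ∈ A, y ∈ B, 0 ≤ t ≤ 1 }` has Lebesgue volume
`(k! l! / (k+l)!) |A| |B|`. -/
theorem volume_join {k l : ℕ}
    (A : Set (Fin k → ℝ)) (B : Set (Fin l → ℝ))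
    (hAcpt : IsCompact A) (hAconv : Convex ℝ A) (hAint : (interior A).Nonempty)
    (hBcpt : IsCompact B) (hBconv : Convex ℝ B) (hBint : (interior B).Nonempty)
    (hA0 : (0 : Fin k → ℝ) ∈ A) (hB0 : (0 : Fin l → ℝ) ∈ B) :
    volume {p : (Fin k → ℝ) × (Fin l → ℝ) |
        ∃ x ∈ A, ∃ y ∈ B, ∃ t : ℝ, 0 ≤ t ∧ t ≤ 1 ∧ p = (t • x, (1 - t) • y)} =
      ((Nat.factorial k * Nat.factorial l : ℝ≥0∞) / (Nat.factorial (k + l) : ℝ≥0∞)) *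
        volume A * volume B :=
  volume_join_general A B hAcpt hAconv hBcpt hBconv hA0 hB0
end

section
/- Let K ⊂ ℝᵏ and L ⊂ ℝˡ be convex bodies with 0 in their interiors, and let x be in the interior of K and y in the interior of L. Then the polar of the product satisfies (K × L)^{(x,y)} = K^x ×₁ L^y, where A ×₁ B = { (ta, (1-t)b) : a ∈ A, b ∈ B, 0 ≤ t ≤ 1 }. -/
/-- If all functionals values of `ξ` over `K` (centered at interior point `x`)
are nonpositive, then `ξ = 0`. -/
lemma aux_zero_of_nonpos {n : ℕ} (K : Set (Fin n → ℝ)) (x : Fin n → ℝ)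
    (hx : x ∈ interior K) (ξ : Fin n → ℝ)
    (h : ∀ z ∈ K, ∑ i, ξ i * (z i - x i) ≤ 0) : ξ = 0 := by
  rw [mem_interior_iff_mem_nhds, Metric.mem_nhds_iff] at hx
  obtain ⟨ε, hε, hball⟩ := hx
  funext i
  have key : ∀ c : ℝ, |c| < ε → ξ i * c ≤ 0 := by
    intro c hc
    have hz : Function.update x i (x i + c) ∈ K := by
      apply hball
      rw [Metric.mem_ball, dist_pi_lt_iff hε]
      intro j
      by_cases hj : j = i
      · subst hj; simp [Real.dist_eq, hc]
      · simp [Function.update_of_ne hj, hε]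
    have := h _ hz
    rw [Finset.sum_eq_single i] at this
    · simpa using this
    · intro j _ hj; simp [Function.update_of_ne hj]
    · simp
  have h1 := key (ε/2) (by rw [abs_of_pos (by linarith)]; linarith)
  have h2 := key (-(ε/2)) (by rw [abs_of_neg (by linarith)]; linarith)
  simp only [Pi.zero_apply]
  nlinarith

/-- Polar of a product with respect to an interior point `(x,y)`:
`(K × L)^{(x,y)} = K^x ×₁ L^y`. -/
theorem polar_of_product {k l : ℕ}
    (K : Set (Fin k → ℝ)) (L : Set (Fin l → ℝ))
    (hKcpt : IsCompact K) (hKconv : Convex ℝ K) (hK0 : (0 : Fin k → ℝ) ∈ interior K)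
    (hLcpt : IsCompact L) (hLconv : Convex ℝ L) (hL0 : (0 : Fin l → ℝ) ∈ interior L)
    (x : Fin k → ℝ) (hx : x ∈ interior K)
    (y : Fin l → ℝ) (hy : y ∈ interior L) :
    {ξ : (Fin k → ℝ) × (Fin l → ℝ) | ∀ z ∈ K ×ˢ L,
        (∑ i, ξ.1 i * (z.1 i - x i)) + (∑ j, ξ.2 j * (z.2 j - y j)) ≤ 1} =
      {p : (Fin k → ℝ) × (Fin l → ℝ) |
        ∃ a ∈ {a : Fin k → ℝ | ∀ z ∈ K, ∑ i, a i * (z i - x i) ≤ 1},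
        ∃ b ∈ {b : Fin l → ℝ | ∀ z ∈ L, ∑ j, b j * (z j - y j) ≤ 1},
        ∃ t : ℝ, 0 ≤ t ∧ t ≤ 1 ∧ p = (t • a, (1 - t) • b)} := by
  have hxK : x ∈ K := interior_subset hx
  have hyL : y ∈ L := interior_subset hy
  ext ξ
  simp only [Set.mem_setOf_eq]
  constructor
  · intro h
    set f : (Fin k → ℝ) → ℝ := fun z => ∑ i, ξ.1 i * (z i - x i) with hf
    set g : (Fin l → ℝ) → ℝ := fun z => ∑ j, ξ.2 j * (z j - y j) with hg
    have hgy : g y = 0 := by simp [hg]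
    have hfx : f x = 0 := by simp [hf]
    have hkey : ∀ z1 ∈ K, ∀ z2 ∈ L, f z1 + g z2 ≤ 1 := by
      intro z1 h1 z2 h2
      exact h (z1, z2) ⟨h1, h2⟩
    set s : ℝ := sSup (f '' K) with hs
    have hne : (f '' K).Nonempty := ⟨f x, ⟨x, hxK, rfl⟩⟩
    have hbdd : BddAbove (f '' K) := by
      refine ⟨1, ?_⟩
      rintro _ ⟨z, hz, rfl⟩
      have := hkey z hz y hyL
      linarith [hgy]
    have hfs : ∀ z ∈ K, f z ≤ s := fun z hz => le_csSup hbdd ⟨z, hz, rfl⟩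
    have hs0 : 0 ≤ s := by have := hfs x hxK; linarith [hfx]
    have hs1 : s ≤ 1 := by
      apply csSup_le hne
      rintro _ ⟨z, hz, rfl⟩
      have := hkey z hz y hyL
      linarith [hgy]
    have hgle : ∀ z2 ∈ L, g z2 ≤ 1 - s := by
      intro z2 h2
      have : s ≤ 1 - g z2 := by
        apply csSup_le hne
        rintro _ ⟨z, hz, rfl⟩
        have := hkey z hz z2 h2
        linarith
      linarith
    rcases eq_or_lt_of_le hs0 with h0 | h0
    · -- s = 0 : ξ.1 = 0
      have hξ1 : ξ.1 = 0 := by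
        apply aux_zero_of_nonpos K x hx
        intro z hz; have := hfs z hz; linarith
      refine ⟨0, ?_, ξ.2, ?_, 0, le_refl 0, zero_le_one, ?_⟩
      · intro z hz; simp
      · intro z hz; have := hgle z hz; linarith
      · ext <;> simp [hξ1]
    rcases eq_or_lt_of_le hs1 with h1 | h1
    · -- s = 1 : ξ.2 = 0
      have hξ2 : ξ.2 = 0 := by
        apply aux_zero_of_nonpos L y hy
        intro z hz; have := hgle z hz; linarith
      refine ⟨ξ.1, ?_, 0, ?_, 1, zero_le_one, le_refl 1, ?_⟩
      · intro z hz; have := hfs z hz; linarith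
      · intro z hz; simp
      · ext <;> simp [hξ2]
    · -- 0 < s < 1
      have hs' : (0:ℝ) < 1 - s := by linarith
      refine ⟨s⁻¹ • ξ.1, ?_, (1 - s)⁻¹ • ξ.2, ?_, s, le_of_lt h0, le_of_lt h1, ?_⟩
      · intro z hz
        have hfz := hfs z hz
        have : ∑ i, (s⁻¹ • ξ.1) i * (z i - x i) = s⁻¹ * f z := by
          simp [hf, Finset.mul_sum, mul_assoc]
        rw [this]
        calc s⁻¹ * f z ≤ s⁻¹ * s := by
              apply mul_le_mul_of_nonneg_left hfz (le_of_lt (inv_pos.mpr h0))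
          _ = 1 := inv_mul_cancel₀ (ne_of_gt h0)
      · intro z hz
        have hgz := hgle z hz
        have : ∑ j, ((1 - s)⁻¹ • ξ.2) j * (z j - y j) = (1 - s)⁻¹ * g z := by
          simp [hg, Finset.mul_sum, mul_assoc]
        rw [this]
        calc (1 - s)⁻¹ * g z ≤ (1 - s)⁻¹ * (1 - s) := by
              apply mul_le_mul_of_nonneg_left hgz (le_of_lt (inv_pos.mpr hs'))
          _ = 1 := inv_mul_cancel₀ (ne_of_gt hs')
      · ext
        · simp only [Pi.smul_apply, smul_eq_mul]
          rw [← mul_assoc, mul_inv_cancel₀ (ne_of_gt h0), one_mul]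
        · simp only [Pi.smul_apply, smul_eq_mul]
          rw [← mul_assoc, mul_inv_cancel₀ (ne_of_gt hs'), one_mul]
  · rintro ⟨a, ha, b, hb, t, ht0, ht1, rfl⟩
    rintro ⟨z1, z2⟩ ⟨h1, h2⟩
    simp only
    have e1 : ∑ i, (t • a) i * (z1 i - x i) = t * ∑ i, a i * (z1 i - x i) := by
      simp [Finset.mul_sum, mul_assoc]
    have e2 : ∑ j, ((1 - t) • b) j * (z2 j - y j) = (1 - t) * ∑ j, b j * (z2 j - y j) := by
      simp [Finset.mul_sum, mul_assoc]
    rw [e1, e2]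
    have hA := ha z1 h1
    have hB := hb z2 h2
    nlinarith
end

section
/- Let Δ ⊂ ℝⁿ be the simplex with vertices v₀ = 0, v₁ = (v₁₁, 0, ..., 0), ..., vₙ = (vₙ₁, ..., vₙₙ), where vᵢⱼ > 0 whenever j ≤ i. Then there exist positive real numbers a₁, ..., aₙ such that for all x ∈ Δ, 0 ≤ aₙxₙ ≤ a_{n-1}x_{n-1} ≤ ... ≤ a₁x₁ ≤ 1. -/
/-!
Scale the coordinates geometrically, `a j = ε ^ (j + 1)`. Along a vertex the scaled coordinates
are then antitone as soon as `ε * v i k ≤ v i j` for `j < k`; this is a finite list of conditions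
each of which holds for small `ε > 0`, because `v i j > 0` whenever `v i k > 0`. The
inequalities cut out a convex set containing the vertices, hence the whole simplex.
-/

open Filter Topology

def scaledChainSet {ι : Type*} [Preorder ι] (a : ι → ℝ) : Set (ι → ℝ) :=
  {x | (∀ j, 0 ≤ a j * x j) ∧ (∀ j k, j ≤ k → a k * x k ≤ a j * x j) ∧ ∀ j, a j * x j ≤ 1}

theorem convex_scaledChainSet {ι : Type*} [Preorder ι] (a : ι → ℝ) :
    Convex ℝ (scaledChainSet a) := by
  rintro x ⟨hx₀, hx_anti, hx₁⟩ y ⟨hy₀, hy_anti, hy₁⟩ s t hs ht hst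
  have combo : ∀ j, a j * (s • x + t • y) j = s * (a j * x j) + t * (a j * y j) := fun j => by
    simp only [Pi.add_apply, Pi.smul_apply, smul_eq_mul]
    ring
  refine ⟨fun j => ?_, fun j k hjk => ?_, fun j => ?_⟩ <;> simp only [combo]
  · exact add_nonneg (mul_nonneg hs (hx₀ j)) (mul_nonneg ht (hy₀ j))
  · exact add_le_add (mul_le_mul_of_nonneg_left (hx_anti j k hjk) hs)
      (mul_le_mul_of_nonneg_left (hy_anti j k hjk) ht)
  · calc s * (a j * x j) + t * (a j * y j) ≤ s * 1 + t * 1 :=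
          add_le_add (mul_le_mul_of_nonneg_left (hx₁ j) hs) (mul_le_mul_of_nonneg_left (hy₁ j) ht)
      _ = 1 := by rw [mul_one, mul_one, hst]

theorem eventually_mul_le_of_pos_imp_pos {b c : ℝ} (hc : 0 ≤ c) (hbc : 0 < b → 0 < c) :
    ∀ᶠ ε in 𝓝[>] (0 : ℝ), ε * b ≤ c := by
  rcases hc.lt_or_eq with hc | rfl
  · have hlim : Tendsto (fun ε : ℝ => ε * b) (𝓝[>] 0) (𝓝 0) :=
      ((continuous_mul_const b).tendsto' 0 0 (zero_mul b)).mono_left nhdsWithin_le_nhds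
    exact (hlim.eventually_lt_const hc).mono fun _ => le_of_lt
  · have hb : b ≤ 0 := not_lt.1 fun hb => (hbc hb).false
    filter_upwards [eventually_mem_nhdsWithin] with ε hε
    exact mul_nonpos_of_nonneg_of_nonpos (le_of_lt hε) hb

section PowScaling

variable {ι : Type*} {n : ℕ} {w : ι → Fin n → ℝ}

theorem exists_small_ratio_bound [Finite ι] (hw : ∀ i j, 0 ≤ w i j)
    (hsupp : ∀ i j k, j ≤ k → 0 < w i k → 0 < w i j) :
    ∃ ε : ℝ, 0 < ε ∧ ε ≤ 1 ∧ (∀ i j, ε * w i j ≤ 1) ∧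
      ∀ i j k, j < k → ε * w i k ≤ w i j := by
  have hone : ∀ᶠ ε in 𝓝[>] (0 : ℝ), ε ≤ 1 := by
    simpa using eventually_mul_le_of_pos_imp_pos (b := 1) zero_le_one fun _ => one_pos
  have hbound : ∀ᶠ ε in 𝓝[>] (0 : ℝ), ∀ i j, ε * w i j ≤ 1 :=
    eventually_all.2 fun i => eventually_all.2 fun j =>
      eventually_mul_le_of_pos_imp_pos zero_le_one fun _ => one_pos
  have hratio : ∀ᶠ ε in 𝓝[>] (0 : ℝ), ∀ i j k, j < k → ε * w i k ≤ w i j :=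
    eventually_all.2 fun i => eventually_all.2 fun j => eventually_all.2 fun k =>
      eventually_imp_distrib_left.2 fun hjk =>
        eventually_mul_le_of_pos_imp_pos (hw i j) (hsupp i j k hjk.le)
  exact (eventually_mem_nhdsWithin.and (hone.and (hbound.and hratio))).exists

theorem mem_scaledChainSet_pow {ε : ℝ} (hw : ∀ i j, 0 ≤ w i j) (hε₀ : 0 < ε) (hε₁ : ε ≤ 1)
    (hbound : ∀ i j, ε * w i j ≤ 1) (hratio : ∀ i j k, j < k → ε * w i k ≤ w i j) (i : ι) :
    w i ∈ scaledChainSet fun j : Fin n => ε ^ ((j : ℕ) + 1) := by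
  have hpow : ∀ m ≠ 0, ε ^ m ≤ ε := fun m hm => pow_le_of_le_one hε₀.le hε₁ hm
  refine ⟨fun j => mul_nonneg (pow_nonneg hε₀.le _) (hw i j), fun j k hjk => ?_, fun j => ?_⟩
  · rcases hjk.lt_or_eq with hjk | rfl
    · have hk : (k : ℕ) + 1 = ((j : ℕ) + 1) + ((k : ℕ) - j) := by omega
      calc ε ^ ((k : ℕ) + 1) * w i k = ε ^ ((j : ℕ) + 1) * (ε ^ ((k : ℕ) - j) * w i k) := by
            rw [hk, pow_add, mul_assoc]
        _ ≤ ε ^ ((j : ℕ) + 1) * (ε * w i k) := by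
            gcongr
            · exact hw i k
            · exact hpow _ (by omega)
        _ ≤ ε ^ ((j : ℕ) + 1) * w i j := by gcongr; exact hratio i j k hjk
    · exact le_rfl
  · calc ε ^ ((j : ℕ) + 1) * w i j ≤ ε * w i j := by gcongr; exacts [hw i j, hpow _ (by omega)]
      _ ≤ 1 := hbound i j

theorem exists_pos_forall_mem_scaledChainSet [Finite ι] (hw : ∀ i j, 0 ≤ w i j)
    (hsupp : ∀ i j k, j ≤ k → 0 < w i k → 0 < w i j) :
    ∃ a : Fin n → ℝ, (∀ j, 0 < a j) ∧ ∀ i, w i ∈ scaledChainSet a := by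
  obtain ⟨ε, hε₀, hε₁, hbound, hratio⟩ := exists_small_ratio_bound hw hsupp
  exact ⟨_, fun j => pow_pos hε₀ _, mem_scaledChainSet_pow hw hε₀ hε₁ hbound hratio⟩

end PowScaling

theorem ordered_simplex_scaling_general {n : ℕ}
    (v : Fin (n + 1) → (Fin n → ℝ))
    (hpos : ∀ (i : Fin (n + 1)) (j : Fin n), (j : ℕ) + 1 ≤ (i : ℕ) → 0 < v i j)
    (hupper : ∀ (i : Fin (n + 1)) (j : Fin n), (i : ℕ) < (j : ℕ) + 1 → v i j = 0) :
    ∃ a : Fin n → ℝ, (∀ j, 0 < a j) ∧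
      ∀ x ∈ convexHull ℝ (Set.range v),
        (∀ j : Fin n, 0 ≤ a j * x j) ∧
        (∀ j k : Fin n, j ≤ k → a k * x k ≤ a j * x j) ∧
        (∀ j : Fin n, a j * x j ≤ 1) := by
  have hnonneg : ∀ i j, 0 ≤ v i j := fun i j => by
    rcases lt_or_ge (i : ℕ) ((j : ℕ) + 1) with h | h
    · exact (hupper i j h).ge
    · exact (hpos i j h).le
  have hsupp : ∀ i j k, j ≤ k → 0 < v i k → 0 < v i j := fun i j k hjk hk => by
    refine hpos i j ?_
    by_contra! h
    exact hk.ne' (hupper i k (by have : (j : ℕ) ≤ k := hjk; omega))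
  obtain ⟨a, ha, hv⟩ := exists_pos_forall_mem_scaledChainSet hnonneg hsupp
  exact ⟨a, ha, fun x hx =>
    convexHull_min (Set.range_subset_iff.2 hv) (convex_scaledChainSet a) hx⟩

/-- For a lower-triangular simplex `Δ = conv{v₀,…,vₙ}` with
`vᵢⱼ > 0` for `j ≤ i` and `vᵢⱼ = 0` for `j > i`, there are positive reals
`a₁,…,aₙ` with `0 ≤ aₙxₙ ≤ ⋯ ≤ a₁x₁ ≤ 1` for all `x ∈ Δ`. -/
theorem ordered_simplex_scaling {n : ℕ}
    (v : Fin (n + 1) → (Fin n → ℝ))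
    (hzero : v 0 = 0)
    (hpos : ∀ (i : Fin (n + 1)) (j : Fin n), (j : ℕ) + 1 ≤ (i : ℕ) → 0 < v i j)
    (hupper : ∀ (i : Fin (n + 1)) (j : Fin n), (i : ℕ) < (j : ℕ) + 1 → v i j = 0) :
    ∃ a : Fin n → ℝ, (∀ j, 0 < a j) ∧
      ∀ x ∈ convexHull ℝ (Set.range v),
        (∀ j : Fin n, 0 ≤ a j * x j) ∧
        (∀ j k : Fin n, j ≤ k → a k * x k ≤ a j * x j) ∧
        (∀ j : Fin n, a j * x j ≤ 1) :=
  ordered_simplex_scaling_general v hpos hupper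
end

section
/- Let m₁, m₂, τ be positive real numbers with m₁ < m₂, and define A_τ := { (x,y) ∈ ℝ² : τ ≤ y, m₁x ≤ y, and m₁(x - τ/m₂) ≥ y - τ }. Then ∫_{A_τ} (1/(xy)) dx dy ≤ m₂/m₁ - 1; in particular the integral is finite. -/
open MeasureTheory Set
open scoped ENNReal

/-! For `y ≥ τ` the horizontal section of the strip is an interval of length `τ/m₁ - τ/m₂`
on which `x ≥ y/m₂`, so `1/(xy) ≤ m₂/y²` there. By Tonelli the integral is at most
`(τ/m₁ - τ/m₂) · m₂ · ∫_τ^∞ y⁻² dy = m₂/m₁ - 1`. -/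

theorem setLIntegral_prod_comp_snd {α β : Type*} [MeasurableSpace α] [MeasurableSpace β]
    {μ : Measure α} {ν : Measure β} [SFinite μ] [SFinite ν] {s : Set (α × β)}
    (hs : MeasurableSet s) {g : β → ℝ≥0∞} (hg : Measurable g) :
    ∫⁻ p in s, g p.2 ∂μ.prod ν = ∫⁻ y, g y * μ ((fun x => (x, y)) ⁻¹' s) ∂ν := by
  rw [← withDensity_apply _ hs, ← prod_withDensity_right hg,
    Measure.prod_apply_symm hs, lintegral_withDensity_eq_lintegral_mul _ hg
      (measurable_measure_prodMk_right hs)]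
  rfl

theorem lintegral_Ici_one_div_sq {τ : ℝ} (hτ : 0 < τ) :
    ∫⁻ y in Ici τ, ENNReal.ofReal (1 / y ^ 2) = ENNReal.ofReal (1 / τ) := by
  have hpow : ∀ y ∈ Ioi τ, ENNReal.ofReal (1 / y ^ 2) = ENNReal.ofReal (y ^ (-2 : ℝ)) :=
    fun y hy => by rw [Real.rpow_neg (hτ.trans hy).le, Real.rpow_two, one_div]
  rw [setLIntegral_congr Ioi_ae_eq_Ici.symm,
    setLIntegral_congr_fun measurableSet_Ioi hpow,
    ← ofReal_integral_eq_lintegral_ofReal (integrableOn_Ioi_rpow_of_lt (by norm_num) hτ),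
    integral_Ioi_rpow_of_lt (by norm_num) hτ]
  · norm_num [Real.rpow_neg_one]
  · filter_upwards [self_mem_ae_restrict measurableSet_Ioi] with y hy
    exact Real.rpow_nonneg (hτ.trans hy).le _

def strip (m₁ m₂ τ : ℝ) : Set (ℝ × ℝ) :=
  {p | τ ≤ p.2 ∧ m₁ * p.1 ≤ p.2 ∧ p.2 - τ ≤ m₁ * (p.1 - τ / m₂)}

section Strip

variable {m₁ m₂ τ : ℝ}

theorem measurableSet_strip : MeasurableSet (strip m₁ m₂ τ) :=
  (measurableSet_le measurable_const measurable_snd).inter <|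
    (measurableSet_le (measurable_fst.const_mul m₁) measurable_snd).inter <|
      measurableSet_le (measurable_snd.sub_const τ) ((measurable_fst.sub_const _).const_mul m₁)

theorem strip_fiber_subset (hm₁ : 0 < m₁) (y : ℝ) :
    (fun x => (x, y)) ⁻¹' strip m₁ m₂ τ ⊆ Icc ((y - τ) / m₁ + τ / m₂) (y / m₁) := by
  rintro x ⟨-, hx_upper, hx_lower⟩
  constructor
  · rw [div_add' _ _ _ hm₁.ne', div_le_iff₀ hm₁]
    linarith
  · rw [le_div_iff₀ hm₁]
    linarith

theorem volume_strip_fiber_le (hm₁ : 0 < m₁) (y : ℝ) :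
    volume ((fun x => (x, y)) ⁻¹' strip m₁ m₂ τ) ≤
      (Ici τ).indicator (fun _ => ENNReal.ofReal (τ / m₁ - τ / m₂)) y := by
  by_cases hy : τ ≤ y
  · rw [indicator_of_mem (mem_Ici.2 hy)]
    calc volume ((fun x => (x, y)) ⁻¹' strip m₁ m₂ τ)
        ≤ volume (Icc ((y - τ) / m₁ + τ / m₂) (y / m₁)) := measure_mono (strip_fiber_subset hm₁ y)
      _ = ENNReal.ofReal (τ / m₁ - τ / m₂) := by rw [Real.volume_Icc]; congr 1; ring
  · rw [indicator_of_notMem (by simpa using hy), nonpos_iff_eq_zero, measure_eq_zero_iff_ae_notMem]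
    exact ae_of_all _ fun x hx => hy hx.1

theorem div_le_fst_of_mem_strip (hm₁ : 0 < m₁) (hm : m₁ < m₂) {p : ℝ × ℝ}
    (hp : p ∈ strip m₁ m₂ τ) : p.2 / m₂ ≤ p.1 := by
  calc p.2 / m₂ = (p.2 - τ) / m₂ + τ / m₂ := by ring
    _ ≤ (p.2 - τ) / m₁ + τ / m₂ := by gcongr; exact sub_nonneg.2 hp.1
    _ ≤ p.1 := (strip_fiber_subset hm₁ p.2 hp).1

theorem one_div_mul_le_of_mem_strip (hm₁ : 0 < m₁) (hm : m₁ < m₂) (hτ : 0 < τ) {p : ℝ × ℝ}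
    (hp : p ∈ strip m₁ m₂ τ) : 1 / (p.1 * p.2) ≤ m₂ * (1 / p.2 ^ 2) := by
  have hm₂ : 0 < m₂ := hm₁.trans hm
  have hy : 0 < p.2 := hτ.trans_le hp.1
  calc 1 / (p.1 * p.2) ≤ 1 / (p.2 / m₂ * p.2) := by
        gcongr
        exact div_le_fst_of_mem_strip hm₁ hm hp
    _ = m₂ * (1 / p.2 ^ 2) := by field_simp

end Strip

/-- The integral of `1/(xy)` over the strip
`A_τ = {(x,y) : τ ≤ y, m₁x ≤ y, m₁(x - τ/m₂) ≥ y - τ}` is at most `m₂/m₁ - 1`;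
in particular it is finite. -/
theorem strip_integral_bound (m₁ m₂ τ : ℝ)
    (hm₁ : 0 < m₁) (hm₂ : 0 < m₂) (hm : m₁ < m₂) (hτ : 0 < τ) :
    (∫⁻ p in {p : ℝ × ℝ | τ ≤ p.2 ∧ m₁ * p.1 ≤ p.2 ∧ p.2 - τ ≤ m₁ * (p.1 - τ / m₂)},
        ENNReal.ofReal (1 / (p.1 * p.2))) ≤ ENNReal.ofReal (m₂ / m₁ - 1) := by
  set g : ℝ → ℝ≥0∞ := fun y => ENNReal.ofReal m₂ * ENNReal.ofReal (1 / y ^ 2)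
  have hg : Measurable g := by fun_prop
  change ∫⁻ p in strip m₁ m₂ τ, _ ≤ _
  calc ∫⁻ p in strip m₁ m₂ τ, ENNReal.ofReal (1 / (p.1 * p.2))
      ≤ ∫⁻ p in strip m₁ m₂ τ, g p.2 :=
        setLIntegral_mono (hg.comp measurable_snd) fun p hp =>
          (ENNReal.ofReal_le_ofReal (one_div_mul_le_of_mem_strip hm₁ hm hτ hp)).trans_eq
            (ENNReal.ofReal_mul hm₂.le)
    _ = ∫⁻ y, g y * volume ((fun x => (x, y)) ⁻¹' strip m₁ m₂ τ) := by
        rw [Measure.volume_eq_prod]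
        exact setLIntegral_prod_comp_snd measurableSet_strip hg
    _ ≤ ∫⁻ y in Ici τ, g y * ENNReal.ofReal (τ / m₁ - τ / m₂) := by
        rw [← lintegral_indicator measurableSet_Ici]
        refine lintegral_mono fun y => ?_
        rw [indicator_mul_right]
        gcongr
        exact volume_strip_fiber_le hm₁ y
    _ = ENNReal.ofReal (m₂ / m₁ - 1) := by
        rw [lintegral_mul_const' _ _ ENNReal.ofReal_ne_top, lintegral_const_mul' _ _
          ENNReal.ofReal_ne_top, lintegral_Ici_one_div_sq hτ, ← ENNReal.ofReal_mul hm₂.le,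
          ← ENNReal.ofReal_mul (by positivity)]
        congr 1
        field_simp
end

section
/- Let F and G be faces of a polytope P ⊂ ℝⁿ containing the origin in its interior, with F ⊂ G and dim G = dim F + 1. Then for any points p, p' ∈ G and q, q' ∈ F° (the face of P° dual to F), one has (1 - ⟨q,p⟩)(1 - ⟨q',p'⟩) = (1 - ⟨q,p'⟩)(1 - ⟨q',p⟩). -/
open Module

noncomputable def dotL {n : ℕ} (q : Fin n → ℝ) : (Fin n → ℝ) →ₗ[ℝ] ℝ where
  toFun y := ∑ i, q i * y i
  map_add' x y := by simp [mul_add, Finset.sum_add_distrib]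
  map_smul' c x := by simp [Finset.mul_sum, mul_left_comm]

/-- If `F ⊂ G` are faces of a polytope `P` (with `0` in its interior)
with `dim G = dim F + 1`, then for `p, p' ∈ G` and `q, q'` in the dual face `F°` of
the polar `P°`, one has `(1-⟨q,p⟩)(1-⟨q',p'⟩) = (1-⟨q,p'⟩)(1-⟨q',p⟩)`. -/
theorem dual_face_cross_ratio {n : ℕ}
    (P : Set (Fin n → ℝ)) (S : Finset (Fin n → ℝ)) (hP : P = convexHull ℝ (S : Set (Fin n → ℝ)))
    (h0 : (0 : Fin n → ℝ) ∈ interior P)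
    (F G : Set (Fin n → ℝ))
    (hF : IsExposed ℝ P F) (hG : IsExposed ℝ P G)
    (hFne : F.Nonempty) (hGne : G.Nonempty)
    (hFG : F ⊆ G)
    (hdim : finrank ℝ (vectorSpan ℝ G) = finrank ℝ (vectorSpan ℝ F) + 1)
    (p p' : Fin n → ℝ) (hp : p ∈ G) (hp' : p' ∈ G)
    (q q' : Fin n → ℝ)
    (hq : (∀ y ∈ P, ∑ i, q i * y i ≤ 1) ∧ ∀ y ∈ F, ∑ i, q i * y i = 1)
    (hq' : (∀ y ∈ P, ∑ i, q' i * y i ≤ 1) ∧ ∀ y ∈ F, ∑ i, q' i * y i = 1) :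
    (1 - ∑ i, q i * p i) * (1 - ∑ i, q' i * p' i) =
      (1 - ∑ i, q i * p' i) * (1 - ∑ i, q' i * p i) := by
  obtain ⟨x0, hx0⟩ := hFne
  set W0 := vectorSpan ℝ F with hW0def
  set W := vectorSpan ℝ G with hWdef
  have hW0W : W0 ≤ W := vectorSpan_mono ℝ hFG
  -- functionals that are 1 on F vanish on W0
  have hker : ∀ (r : Fin n → ℝ), (∀ y ∈ F, ∑ i, r i * y i = 1) →
      W0 ≤ LinearMap.ker (dotL r) := by
    intro r hr
    rw [hW0def, vectorSpan_def]
    apply Submodule.span_le.2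
    rintro w ⟨a, ha, b, hb, rfl⟩
    have : dotL r (a -ᵥ b) = dotL r a - dotL r b := by
      simp [vsub_eq_sub, map_sub]
    simp only [SetLike.mem_coe, LinearMap.mem_ker, this]
    have h1 : dotL r a = 1 := hr a ha
    have h2 : dotL r b = 1 := hr b hb
    rw [h1, h2, sub_self]
  -- find v spanning the complement
  have hne : ¬ (W ≤ W0) := by
    intro h
    have heq : W0 = W := le_antisymm hW0W h
    rw [← heq] at hdim; omega
  obtain ⟨v, hvW, hvW0⟩ := SetLike.not_le_iff_exists.1 hne
  have hsup : W ≤ W0 ⊔ Submodule.span ℝ {v} := by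
    have h1 : W0 ⊔ Submodule.span ℝ {v} ≤ W :=
      sup_le hW0W ((Submodule.span_singleton_le_iff_mem _ _).2 hvW)
    have h2 : finrank ℝ W0 < finrank ℝ ↥(W0 ⊔ Submodule.span ℝ {v}) := by
      apply Submodule.finrank_lt_finrank_of_lt
      refine lt_of_le_of_ne le_sup_left (fun h => hvW0 ?_)
      exact h ▸ (le_sup_right : Submodule.span ℝ {v} ≤ W0 ⊔ _)
        (Submodule.mem_span_singleton_self v)
    have h3 : finrank ℝ ↥(W0 ⊔ Submodule.span ℝ {v}) ≤ finrank ℝ W :=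
      Submodule.finrank_mono h1
    have heq := Submodule.eq_of_le_of_finrank_le h1 (by omega)
    rw [heq]
  -- decompose p and p'
  have hdecomp : ∀ z ∈ G, ∃ (c : ℝ) (s : Fin n → ℝ), s ∈ W0 ∧ z - x0 = s + c • v := by
    intro z hz
    have hzW : z - x0 ∈ W := vsub_mem_vectorSpan ℝ hz (hFG hx0)
    obtain ⟨s, hs, t, ht, hst⟩ := Submodule.mem_sup.1 (hsup hzW)
    obtain ⟨c, rfl⟩ := Submodule.mem_span_singleton.1 ht
    exact ⟨c, s, hs, hst.symm⟩
  obtain ⟨c, s, hs, hcs⟩ := hdecomp p hp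
  obtain ⟨c', s', hs', hcs'⟩ := hdecomp p' hp'
  -- evaluate
  have hval : ∀ (r : Fin n → ℝ), (∀ y ∈ F, ∑ i, r i * y i = 1) →
      ∀ (z : Fin n → ℝ) (d : ℝ) (w : Fin n → ℝ), w ∈ W0 → z - x0 = w + d • v →
      1 - ∑ i, r i * z i = -(d * dotL r v) := by
    intro r hr z d w hw hzw
    have h1 : dotL r (z - x0) = d * dotL r v := by
      rw [hzw, map_add, map_smul]
      have : dotL r w = 0 := hker r hr hw
      simp [this]
    have h2 : dotL r (z - x0) = dotL r z - dotL r x0 := map_sub _ _ _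
    have h3 : dotL r x0 = 1 := hr x0 hx0
    have h4 : dotL r z = ∑ i, r i * z i := rfl
    rw [h2, h3, h4] at h1
    linarith only [h1]
  rw [hval q hq.2 p c s hs hcs, hval q' hq'.2 p' c' s' hs' hcs',
    hval q hq.2 p' c' s' hs' hcs', hval q' hq'.2 p c s hs hcs]
  ring
end

section
/- Let (f_j) be a sequence of lower semicontinuous convex functions on a compact convex set K in a finite-dimensional vector space, with values in ℝ ∪ {∞}, converging pointwise on the interior of K to a lower semicontinuous convex function f that is finite on the interior of K. Then inf_K f_j → inf_K f. Moreover, if each f_j attains its infimum at x_j and x is a limit point of (x_j), then f attains its infimum at x. -/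
/-!
The heart of the matter is a liminf inequality: if points `y i ∈ K` with `g i (y i) ≤ c`
cluster at `x`, then `flim x ≤ c`. Fix `x₀` in the interior of `K`; bounding the `g i` at the
vertices of a small simplex around `x₀` bounds them, eventually and uniformly, by some `M` near
`x₀`. For `t < 1` the point `w = (1 - t) x₀ + t x` is a convex combination, with weight `t`, of
`y i` and a point near `x₀`, so `g i w ≤ (1 - t) M + t c`, whence `flim w ≤ (1 - t) M + t c`;
lower semicontinuity of `flim` at `x` as `t → 1` gives `flim x ≤ c`. Applied to near-minimizers,
with compactness of `K`, this yields the lower bound for the infima and the statement about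
minimizers. The upper bound only needs convergence at interior points, and these suffice because
convexity moves any value of `flim` on `K` into the interior up to an arbitrarily small loss.
-/

open Filter Topology

/-- Convexity for an `EReal`-valued function on a set. -/
def ERealConvexOn {n : ℕ} (K : Set (EuclideanSpace ℝ (Fin n)))
    (f : EuclideanSpace ℝ (Fin n) → EReal) : Prop :=
  ∀ x ∈ K, ∀ y ∈ K, ∀ a b : ℝ, 0 ≤ a → 0 ≤ b → a + b = 1 →
    f (a • x + b • y) ≤ (a : EReal) * f x + (b : EReal) * f y

open Set

variable {n : ℕ}

namespace ERealConvexOn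

variable {K : Set (EuclideanSpace ℝ (Fin n))} {g : EuclideanSpace ℝ (Fin n) → EReal}

theorem le_coe_combo (hg : ERealConvexOn K g) {x y : EuclideanSpace ℝ (Fin n)} (hx : x ∈ K)
    (hy : y ∈ K) {a b : ℝ} (ha : 0 ≤ a) (hb : 0 ≤ b) (hab : a + b = 1) {A B : ℝ}
    (hA : g x ≤ A) (hB : g y ≤ B) : g (a • x + b • y) ≤ ((a * A + b * B : ℝ) : EReal) := by
  refine (hg x hx y hy a b ha hb hab).trans ?_
  rw [EReal.coe_add, EReal.coe_mul, EReal.coe_mul]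
  have ha' : (0 : EReal) ≤ a := by exact_mod_cast ha
  have hb' : (0 : EReal) ≤ b := by exact_mod_cast hb
  exact add_le_add (mul_le_mul_of_nonneg_left hA ha') (mul_le_mul_of_nonneg_left hB hb')

theorem convex_sublevel (hK : Convex ℝ K) (hg : ERealConvexOn K g) (M : ℝ) :
    Convex ℝ {z ∈ K | g z ≤ M} := by
  rintro x ⟨hx, hxM⟩ y ⟨hy, hyM⟩ a b ha hb hab
  refine ⟨hK hx hy ha hb hab, (hg.le_coe_combo hx hy ha hb hab hxM hyM).trans_eq ?_⟩
  rw [← add_mul, hab, one_mul]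

end ERealConvexOn

theorem eventually_coe_combo_lt {A c : ℝ} {b : EReal} (hc : (c : EReal) < b) :
    ∀ᶠ t in 𝓝[<] (1 : ℝ), t ∈ Ioo 0 1 ∧ (((1 - t) * A + t * c : ℝ) : EReal) < b := by
  have hlim : Tendsto (fun t : ℝ => (((1 - t) * A + t * c : ℝ) : EReal)) (𝓝 1) (𝓝 c) :=
    continuous_coe_real_ereal.continuousAt.tendsto.comp <|
      (by fun_prop : Continuous fun t : ℝ => (1 - t) * A + t * c).tendsto' 1 c (by ring)
  exact Filter.Eventually.and (Ioo_mem_nhdsLT one_pos)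
    ((hlim.eventually_lt_const hc).filter_mono nhdsWithin_le_nhds)

theorem ERealConvexOn.exists_mem_interior_lt {K : Set (EuclideanSpace ℝ (Fin n))}
    {g : EuclideanSpace ℝ (Fin n) → EReal} (hK : Convex ℝ K) (hg : ERealConvexOn K g)
    {x₀ : EuclideanSpace ℝ (Fin n)} (hx₀ : x₀ ∈ interior K) (hgx₀ : g x₀ ≠ ⊤)
    {y : EuclideanSpace ℝ (Fin n)} (hy : y ∈ K) {b : EReal} (hyb : g y < b) :
    ∃ z ∈ interior K, g z < b := by
  obtain ⟨A, hA, -⟩ := EReal.lt_iff_exists_real_btwn.1 hgx₀.lt_top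
  obtain ⟨c, hyc, hcb⟩ := EReal.lt_iff_exists_real_btwn.1 hyb
  obtain ⟨t, ⟨ht₀, ht₁⟩, hlt⟩ := (eventually_coe_combo_lt (A := A) hcb).exists
  refine ⟨(1 - t) • x₀ + t • y,
    hK.combo_interior_self_mem_interior hx₀ hy (sub_pos.2 ht₁) ht₀.le (by ring), ?_⟩
  exact (hg.le_coe_combo (interior_subset hx₀) hy (sub_pos.2 ht₁).le ht₀.le (by ring)
    hA.le hyc.le).trans_lt hlt

section PointwiseLimit

variable {ι : Type*} {l : Filter ι} {K : Set (EuclideanSpace ℝ (Fin n))}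
  {g : ι → EuclideanSpace ℝ (Fin n) → EReal} {flim : EuclideanSpace ℝ (Fin n) → EReal}

theorem exists_mem_nhds_eventually_le (hK : Convex ℝ K) (hg : ∀ i, ERealConvexOn K (g i))
    (hfin : ∀ x ∈ interior K, flim x ≠ ⊤)
    (hlim : ∀ x ∈ interior K, Tendsto (fun i => g i x) l (𝓝 (flim x)))
    {x₀ : EuclideanSpace ℝ (Fin n)} (hx₀ : x₀ ∈ interior K) :
    ∃ U ∈ 𝓝 x₀, U ⊆ K ∧ ∃ M : ℝ, ∀ᶠ i in l, ∀ z ∈ U, g i z ≤ M := by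
  obtain ⟨b, hx₀b, hbK⟩ := exists_mem_interior_convexHull_affineBasis
    (isOpen_interior.mem_nhds hx₀)
  have hv : ∀ k, b k ∈ interior K := fun k => hbK (subset_convexHull ℝ _ (mem_range_self k))
  have hsup : Finset.univ.sup (flim ∘ b) < ⊤ :=
    (Finset.sup_lt_iff bot_lt_top).2 fun k _ => (hfin _ (hv k)).lt_top
  obtain ⟨M, hM, -⟩ := EReal.lt_iff_exists_real_btwn.1 hsup
  have hev : ∀ᶠ i in l, ∀ k, g i (b k) ≤ M := eventually_all.2 fun k =>
    ((hlim _ (hv k)).eventually_lt_const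
      ((Finset.le_sup (f := flim ∘ b) (Finset.mem_univ k)).trans_lt hM)).mono fun _ h => h.le
  refine ⟨convexHull ℝ (range b), mem_interior_iff_mem_nhds.1 hx₀b,
    hbK.trans interior_subset, M, hev.mono fun i hi z hz => ?_⟩
  have hsub : range b ⊆ {z ∈ K | g i z ≤ M} :=
    range_subset_iff.2 fun k => ⟨interior_subset (hv k), hi k⟩
  exact (convexHull_min hsub ((hg i).convex_sublevel hK M) hz).2

theorem le_of_mapClusterPt_of_eventually_le (hK : Convex ℝ K) (hKint : (interior K).Nonempty)
    (hg : ∀ i, ERealConvexOn K (g i)) (hfin : ∀ x ∈ interior K, flim x ≠ ⊤)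
    (hlim : ∀ x ∈ interior K, Tendsto (fun i => g i x) l (𝓝 (flim x)))
    {x : EuclideanSpace ℝ (Fin n)} (hx : x ∈ K) (hlsc : LowerSemicontinuousWithinAt flim K x)
    {y : ι → EuclideanSpace ℝ (Fin n)} (hyx : MapClusterPt x l y) {c : EReal}
    (hyc : ∀ᶠ i in l, y i ∈ K ∧ g i (y i) ≤ c) :
    flim x ≤ c := by
  obtain ⟨x₀, hx₀⟩ := hKint
  obtain ⟨U, hU, hUK, M, hM⟩ := exists_mem_nhds_eventually_le hK hg hfin hlim hx₀
  by_contra! hxc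
  obtain ⟨c', hcc', hc'x⟩ := exists_between hxc
  obtain ⟨c₁, hcc₁, hc₁c'⟩ := EReal.lt_iff_exists_real_btwn.1 hcc'
  have hseg : Tendsto (fun t : ℝ => (1 - t) • x₀ + t • x) (𝓝[<] 1) (𝓝[K] x) := by
    refine tendsto_nhdsWithin_iff.2 ⟨?_, ?_⟩
    · exact ((by fun_prop : Continuous fun t : ℝ => (1 - t) • x₀ + t • x).tendsto' 1 x
        (by simp)).mono_left nhdsWithin_le_nhds
    · filter_upwards [Ioo_mem_nhdsLT one_pos] with t ht
      exact hK (interior_subset hx₀) hx (sub_pos.2 ht.2).le ht.1.le (by ring)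
  -- Choose `t < 1` so close to `1` that `flim > c'` at `w` and `(1 - t) M + t c₁ < c'`.
  obtain ⟨t, ⟨⟨ht₀, ht₁⟩, hlt⟩, hwx⟩ :=
    ((eventually_coe_combo_lt (A := M) hc₁c').and (hseg.eventually (hlsc c' hc'x))).exists
  set w := (1 - t) • x₀ + t • x
  have hw : w ∈ interior K :=
    hK.combo_interior_self_mem_interior hx₀ hx (sub_pos.2 ht₁) ht₀.le (by ring)
  set u : EuclideanSpace ℝ (Fin n) → EuclideanSpace ℝ (Fin n) :=
    fun z => x₀ + (t / (1 - t)) • (x - z)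
  have hu : ∀ᶠ z in 𝓝 x, u z ∈ U :=
    ((by fun_prop : Continuous u).tendsto' x x₀ (by simp [u])).eventually hU
  have hcombo : ∀ z, (1 - t) • u z + t • z = w := fun z => by
    simp only [u, w, smul_add, smul_smul, mul_div_cancel₀ _ (sub_pos.2 ht₁).ne']
    module
  obtain ⟨i, ⟨⟨hyK, hyc⟩, hMi, hwi⟩, hui⟩ := ((hyc.and (hM.and
    ((hlim w hw).eventually_const_lt hwx))).and_frequently
    (mapClusterPt_iff_frequently.1 hyx _ hu)).exists
  have hgw := (hg i).le_coe_combo (hUK hui) hyK (sub_pos.2 ht₁).le ht₀.le (by ring)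
    (hMi _ hui) (hyc.trans hcc₁.le)
  rw [hcombo] at hgw
  exact lt_irrefl _ ((hwi.trans_le hgw).trans hlt)

theorem eventually_sInf_image_lt (hK : Convex ℝ K) (hKint : (interior K).Nonempty)
    (hflim : ERealConvexOn K flim) (hfin : ∀ x ∈ interior K, flim x ≠ ⊤)
    (hlim : ∀ x ∈ interior K, Tendsto (fun i => g i x) l (𝓝 (flim x)))
    {b : EReal} (hb : sInf (flim '' K) < b) :
    ∀ᶠ i in l, sInf (g i '' K) < b := by
  obtain ⟨x₀, hx₀⟩ := hKint
  obtain ⟨_, ⟨y, hy, rfl⟩, hyb⟩ := sInf_lt_iff.1 hb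
  obtain ⟨z, hz, hzb⟩ := hflim.exists_mem_interior_lt hK hx₀ (hfin x₀ hx₀) hy hyb
  exact ((hlim z hz).eventually_lt_const hzb).mono fun i hi =>
    (sInf_le (mem_image_of_mem _ (interior_subset hz))).trans_lt hi

theorem eventually_lt_sInf_image (hKcpt : IsCompact K) (hK : Convex ℝ K)
    (hKint : (interior K).Nonempty) (hg : ∀ i, ERealConvexOn K (g i))
    (hfin : ∀ x ∈ interior K, flim x ≠ ⊤)
    (hlim : ∀ x ∈ interior K, Tendsto (fun i => g i x) l (𝓝 (flim x)))
    (hlsc : LowerSemicontinuousOn flim K) {a : EReal} (ha : a < sInf (flim '' K)) :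
    ∀ᶠ i in l, a < sInf (g i '' K) := by
  obtain ⟨c, hac, hcm⟩ := exists_between ha
  by_contra h
  simp only [not_eventually, not_lt] at h
  -- Along the indices with `sInf (g i '' K) ≤ a`, pick points `y i ∈ K` with `g i (y i) ≤ c`;
  -- a cluster point of them violates `c < sInf (flim '' K)`.
  set l' := l ⊓ 𝓟 {i | sInf (g i '' K) ≤ a}
  have : l'.NeBot := frequently_iff_neBot.1 h
  have hpick : ∀ i, ∃ y, sInf (g i '' K) ≤ a → y ∈ K ∧ g i y ≤ c := fun i => by
    by_cases hi : sInf (g i '' K) ≤ a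
    · obtain ⟨_, ⟨y, hy, rfl⟩, hyc⟩ := sInf_lt_iff.1 (hi.trans_lt hac)
      exact ⟨y, fun _ => ⟨hy, hyc.le⟩⟩
    · exact ⟨0, fun h => absurd h hi⟩
  choose y hy using hpick
  have hyc : ∀ᶠ i in l', y i ∈ K ∧ g i (y i) ≤ c :=
    eventually_inf_principal.2 (Eventually.of_forall hy)
  obtain ⟨x, hx, hyx⟩ :=
    hKcpt.exists_mapClusterPt_of_frequently (hyc.frequently.mono fun _ h => h.1)
  have hxc := le_of_mapClusterPt_of_eventually_le hK hKint hg hfin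
    (fun z hz => (hlim z hz).mono_left inf_le_left) hx (hlsc x hx) hyx hyc
  exact (hxc.trans_lt hcm).not_ge (sInf_le (mem_image_of_mem flim hx))

end PointwiseLimit

theorem convergence_of_minima_general {n : ℕ}
    (K : Set (EuclideanSpace ℝ (Fin n)))
    (hKcpt : IsCompact K) (hKconv : Convex ℝ K) (hKint : (interior K).Nonempty)
    (f : ℕ → EuclideanSpace ℝ (Fin n) → EReal)
    (flim : EuclideanSpace ℝ (Fin n) → EReal)
    (hconv : ∀ j, ERealConvexOn K (f j))
    (hlimconv : ERealConvexOn K flim)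
    (hlimlsc : LowerSemicontinuousOn flim K)
    (hlimfin : ∀ x ∈ interior K, flim x ≠ ⊤)
    (hptwise : ∀ x ∈ interior K, Tendsto (fun j => f j x) atTop (𝓝 (flim x))) :
    Tendsto (fun j => sInf (f j '' K)) atTop (𝓝 (sInf (flim '' K))) ∧
      ∀ xs : ℕ → EuclideanSpace ℝ (Fin n),
        (∀ j, xs j ∈ K ∧ ∀ y ∈ K, f j (xs j) ≤ f j y) →
        ∀ x, MapClusterPt x atTop xs → ∀ y ∈ K, flim x ≤ flim y := by
  refine ⟨tendsto_order.2 ⟨fun a ha => eventually_lt_sInf_image hKcpt hKconv hKint hconv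
    hlimfin hptwise hlimlsc ha, fun b hb => eventually_sInf_image_lt hKconv hKint hlimconv
    hlimfin hptwise hb⟩, ?_⟩
  intro xs hxs x hx y hy
  have hxK : x ∈ K := hKcpt.isClosed.closure_subset <| mem_closure_iff_clusterPt.2 <|
    ClusterPt.mono hx (tendsto_principal.2 (Eventually.of_forall fun j => (hxs j).1))
  refine le_of_forall_gt_imp_ge_of_dense fun c hc => le_of_mapClusterPt_of_eventually_le
    hKconv hKint hconv hlimfin hptwise hxK (hlimlsc x hxK) hx ?_
  filter_upwards [eventually_sInf_image_lt hKconv hKint hlimconv hlimfin hptwise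
    ((sInf_le (mem_image_of_mem flim hy)).trans_lt hc)] with j hj
  exact ⟨(hxs j).1, (le_sInf (forall_mem_image.2 (hxs j).2)).trans hj.le⟩

/-- Convergence of infima and of minimizers for a pointwise convergent
sequence of lower semicontinuous convex functions with values in `ℝ ∪ {∞}` on a
convex body `K`. -/
theorem convergence_of_minima {n : ℕ}
    (K : Set (EuclideanSpace ℝ (Fin n)))
    (hKcpt : IsCompact K) (hKconv : Convex ℝ K) (hKint : (interior K).Nonempty)
    (f : ℕ → EuclideanSpace ℝ (Fin n) → EReal)
    (flim : EuclideanSpace ℝ (Fin n) → EReal)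
    (hnotbot : ∀ j, ∀ x ∈ K, f j x ≠ ⊥)
    (hlimnotbot : ∀ x ∈ K, flim x ≠ ⊥)
    (hconv : ∀ j, ERealConvexOn K (f j))
    (hlsc : ∀ j, LowerSemicontinuousOn (f j) K)
    (hlimconv : ERealConvexOn K flim)
    (hlimlsc : LowerSemicontinuousOn flim K)
    (hlimfin : ∀ x ∈ interior K, flim x ≠ ⊤)
    (hptwise : ∀ x ∈ interior K, Tendsto (fun j => f j x) atTop (𝓝 (flim x))) :
    Tendsto (fun j => sInf (f j '' K)) atTop (𝓝 (sInf (flim '' K))) ∧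
      ∀ xs : ℕ → EuclideanSpace ℝ (Fin n),
        (∀ j, xs j ∈ K ∧ ∀ y ∈ K, f j (xs j) ≤ f j y) →
        ∀ x, MapClusterPt x atTop xs → ∀ y ∈ K, flim x ≤ flim y :=
  convergence_of_minima_general K hKcpt hKconv hKint f flim hconv hlimconv hlimlsc hlimfin hptwise
end
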